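/- Suppose the incidence matrix partitions as B̄₍₁₎ = [T₍₁₎,₁, …, T₍₁₎,M−1, T⁺₍₁₎,M] with block-diagonal weight matrix W̄ = diag(W̄₁,…,W̄_M), where each T₍₁₎,b (b < M) is square and invertible, and L₍₁₎ = B̄₍₁₎ W̄ B̄₍₁₎ᵀ is invertible. Define ψ̂₍₁₎,b = (T₍₁₎,bᵀ)⁻¹ Δ_b for b < M and ψ̂₍₁₎,M = (T⁺₍₁₎,M W̄_M (T⁺₍₁₎,M)ᵀ)⁻¹ T⁺₍₁₎,M W̄_M Δ_M, and set C₍₁₎,b = L₍₁₎⁻¹ T₍₁₎,b W̄_b T₍₁₎,bᵀ for b < M, C₍₁₎,M = L₍₁₎⁻¹ T⁺₍₁₎,M W̄_M (T⁺₍₁₎,M)ᵀ. Then the full-sample estimator ψ̂₍₁₎ = L₍₁₎⁻¹ B̄₍₁₎ W̄ Δ satisfies ψ̂₍₁₎ = ∑_{b=1}^M C₍₁₎,b ψ̂₍₁₎,b and ∑_{b=1}^M C₍₁₎,b = I. -/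
import Mathlib


open Matrix

/-- Proposition 1: the full-sample two-way fixed effects estimator is a linear
combination of branch-specific estimates, with combination matrices summing to
the identity.  The first `M₀ = M − 1` branches correspond to spanning trees with
square invertible incidence matrices `T b`; the last branch has (possibly
rectangular) incidence matrix `Tp` that includes the leftover edges. -/
theorem full_sample_is_lincom_of_branches
    {n M₀ m : ℕ}
    (T : Fin M₀ → Matrix (Fin n) (Fin n) ℝ)
    (W : Fin M₀ → Fin n → ℝ) (hW : ∀ b i, 0 < W b i)
    (Δ : Fin M₀ → Fin n → ℝ)
    (Tp : Matrix (Fin n) (Fin m) ℝ)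
    (Wlast : Fin m → ℝ) (hWlast : ∀ i, 0 < Wlast i)
    (Δlast : Fin m → ℝ)
    (hT : ∀ b, IsUnit (T b))
    (hTp : IsUnit (Tp * diagonal Wlast * Tpᵀ))
    (L : Matrix (Fin n) (Fin n) ℝ)
    (hL : L = ∑ b, T b * diagonal (W b) * (T b)ᵀ + Tp * diagonal Wlast * Tpᵀ)
    (hLinv : IsUnit L)
    (ψb : Fin M₀ → Fin n → ℝ)
    (hψb : ∀ b, ψb b = ((T b)ᵀ)⁻¹.mulVec (Δ b))
    (ψlast : Fin n → ℝ)
    (hψlast : ψlast =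
      (Tp * diagonal Wlast * Tpᵀ)⁻¹.mulVec ((Tp * diagonal Wlast).mulVec Δlast))
    (C : Fin M₀ → Matrix (Fin n) (Fin n) ℝ)
    (hC : ∀ b, C b = L⁻¹ * (T b * diagonal (W b) * (T b)ᵀ))
    (Clast : Matrix (Fin n) (Fin n) ℝ)
    (hClast : Clast = L⁻¹ * (Tp * diagonal Wlast * Tpᵀ))
    (ψhat : Fin n → ℝ)
    (hψhat : ψhat = L⁻¹.mulVec
      ((∑ b, (T b * diagonal (W b)).mulVec (Δ b)) +
        (Tp * diagonal Wlast).mulVec Δlast)) :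
    ψhat = (∑ b, (C b).mulVec (ψb b)) + Clast.mulVec ψlast ∧
      (∑ b, C b) + Clast = 1 := by
  have hdetL : IsUnit L.det := (Matrix.isUnit_iff_isUnit_det L).1 hLinv
  have hTt : ∀ b, IsUnit ((T b)ᵀ).det := fun b => by
    rw [Matrix.det_transpose]; exact (Matrix.isUnit_iff_isUnit_det _).1 (hT b)
  have hdetTp : IsUnit (Tp * diagonal Wlast * Tpᵀ).det :=
    (Matrix.isUnit_iff_isUnit_det _).1 hTp
  constructor
  · have hterm : ∀ b, (C b).mulVec (ψb b)
        = (L⁻¹ * (T b * diagonal (W b))).mulVec (Δ b) := by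
      intro b
      rw [hψb b, hC b, Matrix.mulVec_mulVec]
      have : L⁻¹ * (T b * diagonal (W b) * (T b)ᵀ) * ((T b)ᵀ)⁻¹
          = L⁻¹ * (T b * diagonal (W b)) := by
        rw [mul_assoc, mul_assoc, Matrix.mul_nonsing_inv _ (hTt b), mul_one]
      rw [this]
    have hlast : Clast.mulVec ψlast
        = (L⁻¹ * (Tp * diagonal Wlast)).mulVec Δlast := by
      rw [hψlast, hClast, Matrix.mulVec_mulVec, Matrix.mulVec_mulVec]
      have : L⁻¹ * (Tp * diagonal Wlast * Tpᵀ) * (Tp * diagonal Wlast * Tpᵀ)⁻¹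
          = L⁻¹ := by
        rw [mul_assoc, Matrix.mul_nonsing_inv _ hdetTp, mul_one]
      rw [this]
    have hsum : L⁻¹.mulVec (∑ b, (T b * diagonal (W b)).mulVec (Δ b))
        = ∑ b, (L⁻¹ * (T b * diagonal (W b))).mulVec (Δ b) := by
      simp only [← Matrix.mulVecLin_apply, map_sum, Matrix.mulVecLin_mul,
        LinearMap.comp_apply]
    simp only [hterm, hlast, hψhat, Matrix.mulVec_add, Matrix.mulVec_mulVec, hsum]
  · have key : (∑ b, C b) + Clast = L⁻¹ * L := by
      simp only [hC, hClast]
      rw [← Finset.mul_sum, ← mul_add, hL]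
    rw [key, Matrix.nonsing_inv_mul _ hdetL]
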